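/- For all integers n ≥ 1 and m ≥ 0, the neutrix limit as ε → 0⁺ of −∫_ε^1 t^{−m−1} (log t)^n / (1−t) dt equals Σ_{i=1}^m n!/i^{n+1} + (−1)^{n+1} · n! · ζ(n+1); that is, there exists a negligible function N(ε) such that −∫_ε^1 t^{−m−1}(log t)^n/(1−t) dt − N(ε) tends to Σ_{i=1}^m n!/i^{n+1} + (−1)^{n+1} n! ζ(n+1) as ε → 0⁺. -/

import Mathlib

open MeasureTheory Real Filter Set

/-- A negligible function: a finite real linear combination of `ε ↦ ε^λ (log ε)^k`
with `λ < 0` real and `k ∈ ℕ`, and `ε ↦ (log ε)^k` with `k ≥ 1`. -/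
def Negligible (N : ℝ → ℝ) : Prop :=
  ∃ (s : Finset (ℝ × ℕ)) (c : ℝ × ℕ → ℝ) (T : Finset ℕ) (d : ℕ → ℝ),
    (∀ p ∈ s, p.1 < 0) ∧ (∀ k ∈ T, 1 ≤ k) ∧
    ∀ ε : ℝ, N ε = (∑ p ∈ s, c p * ε ^ p.1 * Real.log ε ^ p.2) +
      ∑ k ∈ T, d k * Real.log ε ^ k

/-- `NeutrixLim F c` : the neutrix limit of `F ε` as `ε → 0⁺` is `c`, i.e. there is a
negligible function `N` with `F ε − N ε → c` as `ε → 0⁺`. -/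
def NeutrixLim (F : ℝ → ℝ) (c : ℝ) : Prop :=
  ∃ N : ℝ → ℝ, Negligible N ∧
    Tendsto (fun ε => F ε - N ε) (nhdsWithin 0 (Set.Ioi 0)) (nhds c)

/-!
Since `t ^ (-m - 1) / (1 - t) = ∑_{i=0}^{m} t ^ (-i - 1) + 1 / (1 - t)`, the integral over
`(ε, 1)` splits into the elementary integrals `∫_ε^1 t ^ (-i - 1) (-log t) ^ n`, which repeated
integration by parts evaluates exactly, plus `∫_ε^1 (-log t) ^ n / (1 - t)`. The elementary
integrals contribute their values at `t = 1`, namely `n! / (-i) ^ (n + 1)`, and at `t = ε` a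
combination of `ε ^ (-i) (log ε) ^ k` and `(log ε) ^ (n + 1)`, which is negligible. The remaining
integral converges, as `ε → 0⁺`, to `∫_0^1 (-log t) ^ n / (1 - t)`; expanding `1 / (1 - t)` as a
geometric series and using `∫_0^1 t ^ k (-log t) ^ n = n! / (k + 1) ^ (n + 1)` gives `n! ζ(n + 1)`.
-/

open scoped Topology Nat

/-- An antiderivative of `t ^ (b - 1) * (-log t) ^ p` for `b ≠ 0`, by repeated integration by
parts. -/
noncomputable def rpowLogPrimitive (b : ℝ) : ℕ → ℝ → ℝ
  | 0 => fun t => t ^ b / b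
  | p + 1 => fun t => t ^ b * (-log t) ^ (p + 1) / b + (p + 1) / b * rpowLogPrimitive b p t

section rpowLogPrimitive

variable {b : ℝ}

theorem hasDerivAt_rpowLogPrimitive (hb : b ≠ 0) (p : ℕ) {t : ℝ} (ht : t ≠ 0) :
    HasDerivAt (rpowLogPrimitive b p) (t ^ (b - 1) * (-log t) ^ p) t := by
  have hrpow : HasDerivAt (fun t => t ^ b) (b * t ^ (b - 1)) t :=
    hasDerivAt_rpow_const (Or.inl ht)
  induction p with
  | zero => exact (hrpow.div_const b).congr_deriv (by field_simp)
  | succ p ih =>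
    have hlog : HasDerivAt (fun x => (-log x) ^ (p + 1)) ((p + 1 : ℕ) * (-log t) ^ p * -t⁻¹) t :=
      (hasDerivAt_log ht).neg.pow (p + 1)
    refine (((hrpow.mul hlog).div_const b).add (ih.const_mul ((p + 1) / b))).congr_deriv ?_
    rw [rpow_sub_one ht]
    push_cast
    field_simp
    ring

theorem rpowLogPrimitive_one (hb : b ≠ 0) (p : ℕ) :
    rpowLogPrimitive b p 1 = p ! / b ^ (p + 1) := by
  induction p with
  | zero => simp [rpowLogPrimitive]
  | succ p ih =>
    simp only [rpowLogPrimitive, ih, log_one, one_rpow, Nat.factorial_succ]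
    push_cast
    field_simp
    ring

theorem rpowLogPrimitive_zero (hb : b ≠ 0) (p : ℕ) : rpowLogPrimitive b p 0 = 0 := by
  induction p with
  | zero => simp [rpowLogPrimitive, zero_rpow hb]
  | succ p ih => simp [rpowLogPrimitive, zero_rpow hb, ih]

theorem tendsto_rpow_mul_neg_log_pow_nhdsGT_zero (hb : 0 < b) (p : ℕ) :
    Tendsto (fun t => t ^ b * (-log t) ^ p) (𝓝[>] 0) (𝓝 0) := by
  refine (isLittleO_abs_log_rpow_rpow_nhdsGT_zero p (neg_lt_zero.2 hb)).tendsto_div_nhds_zero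
    |>.congr' ?_
  filter_upwards [Ioo_mem_nhdsGT one_pos] with t ⟨ht0, ht1⟩
  rw [abs_of_nonpos (log_nonpos ht0.le ht1.le), rpow_natCast, rpow_neg ht0.le, div_inv_eq_mul,
    mul_comm]

theorem tendsto_rpowLogPrimitive_nhdsGT_zero (hb : 0 < b) (p : ℕ) :
    Tendsto (rpowLogPrimitive b p) (𝓝[>] 0) (𝓝 0) := by
  induction p with
  | zero =>
    have := ((continuousAt_rpow_const 0 b (Or.inr hb.le)).tendsto.div_const b).mono_left
      (nhdsWithin_le_nhds (s := Ioi 0))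
    simpa [rpowLogPrimitive, zero_rpow hb.ne'] using this
  | succ p ih =>
    simpa [rpowLogPrimitive] using
      ((tendsto_rpow_mul_neg_log_pow_nhdsGT_zero hb (p + 1)).div_const b).add
        (ih.const_mul ((p + 1) / b))

theorem continuousOn_rpowLogPrimitive (hb : 0 < b) (p : ℕ) :
    ContinuousOn (rpowLogPrimitive b p) (Ici 0) := by
  intro t ht
  rcases (mem_Ici.1 ht).eq_or_lt with rfl | ht
  · rw [← continuousWithinAt_Ioi_iff_Ici, ContinuousWithinAt, rpowLogPrimitive_zero hb.ne']
    exact tendsto_rpowLogPrimitive_nhdsGT_zero hb p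
  · exact (hasDerivAt_rpowLogPrimitive hb.ne' p ht.ne').continuousAt.continuousWithinAt

theorem intervalIntegrable_rpow_mul_neg_log_pow (r : ℝ) (p : ℕ) {a c : ℝ} (ha : 0 < a)
    (hc : 0 < c) :
    IntervalIntegrable (fun t => t ^ r * (-log t) ^ p) volume a c := by
  have hne : ∀ t ∈ uIcc a c, t ≠ 0 := fun t ht => ((lt_min ha hc).trans_le ht.1).ne'
  exact ContinuousOn.intervalIntegrable <|
    (continuousOn_id.rpow_const fun t ht => Or.inl (hne t ht)).mul
      ((continuousOn_log.mono fun t ht => hne t ht).neg.pow p)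

theorem integral_rpow_mul_neg_log_pow (hb : b ≠ 0) (p : ℕ) {a c : ℝ} (ha : 0 < a) (hc : 0 < c) :
    ∫ t in a..c, t ^ (b - 1) * (-log t) ^ p = rpowLogPrimitive b p c - rpowLogPrimitive b p a := by
  have hne : ∀ t ∈ uIcc a c, t ≠ 0 := fun t ht => ((lt_min ha hc).trans_le ht.1).ne'
  exact intervalIntegral.integral_eq_sub_of_hasDerivAt
    (fun t ht => hasDerivAt_rpowLogPrimitive hb p (hne t ht))
    (intervalIntegrable_rpow_mul_neg_log_pow (b - 1) p ha hc)

theorem integral_inv_mul_neg_log_pow (p : ℕ) {a c : ℝ} (ha : 0 < a) (hc : 0 < c) :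
    ∫ t in a..c, t⁻¹ * (-log t) ^ p = ((-log a) ^ (p + 1) - (-log c) ^ (p + 1)) / (p + 1) := by
  have hne : ∀ t ∈ uIcc a c, t ≠ 0 := fun t ht => ((lt_min ha hc).trans_le ht.1).ne'
  have hderiv : ∀ t ∈ uIcc a c, HasDerivAt (fun x => -(-log x) ^ (p + 1) / (p + 1))
      (t⁻¹ * (-log t) ^ p) t := fun t ht =>
    (((hasDerivAt_log (hne t ht)).neg.pow (p + 1)).neg.div_const _).congr_deriv (by
      simp only [Pi.neg_apply]
      push_cast
      field_simp)
  rw [intervalIntegral.integral_eq_sub_of_hasDerivAt hderiv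
    (by simpa [rpow_neg_one] using intervalIntegrable_rpow_mul_neg_log_pow (-1) p ha hc)]
  ring

theorem intervalIntegrable_rpow_mul_neg_log_pow_zero_one (hb : 0 < b) (p : ℕ) :
    IntervalIntegrable (fun t => t ^ (b - 1) * (-log t) ^ p) volume 0 1 := by
  rw [intervalIntegrable_iff_integrableOn_Ioc_of_le zero_le_one]
  refine intervalIntegral.integrableOn_deriv_of_nonneg
    ((continuousOn_rpowLogPrimitive hb p).mono Icc_subset_Ici_self)
    (fun t ht => hasDerivAt_rpowLogPrimitive hb.ne' p ht.1.ne') fun t ⟨ht0, ht1⟩ => ?_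
  have := neg_nonneg.2 (log_nonpos ht0.le ht1.le)
  positivity

theorem integral_rpow_mul_neg_log_pow_zero_one (hb : 0 < b) (p : ℕ) :
    ∫ t in (0 : ℝ)..1, t ^ (b - 1) * (-log t) ^ p = p ! / b ^ (p + 1) := by
  rw [intervalIntegral.integral_eq_sub_of_hasDerivAt_of_le zero_le_one
    ((continuousOn_rpowLogPrimitive hb p).mono Icc_subset_Ici_self)
    (fun t ht => hasDerivAt_rpowLogPrimitive hb.ne' p ht.1.ne')
    (intervalIntegrable_rpow_mul_neg_log_pow_zero_one hb p),
    rpowLogPrimitive_one hb.ne', rpowLogPrimitive_zero hb.ne', sub_zero]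

end rpowLogPrimitive

theorem neg_log_le_two_mul_one_sub_div_sqrt {t : ℝ} (ht0 : 0 < t) (ht1 : t ≤ 1) :
    -log t ≤ 2 * (1 - t) / √t := by
  have hs : 0 < √t := sqrt_pos.2 ht0
  calc -log t = 2 * log (√t)⁻¹ := by rw [log_inv, log_sqrt ht0.le]; ring
    _ ≤ 2 * ((√t)⁻¹ - 1) := by gcongr; exact log_le_sub_one_of_pos (inv_pos.2 hs)
    _ = 2 * (1 - √t) / √t := by field_simp
    _ ≤ 2 * (1 - t) / √t := by gcongr; exact le_sqrt_self_iff.2 ht1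

theorem intervalIntegrable_neg_log_pow_div_one_sub {n : ℕ} (hn : 1 ≤ n) :
    IntervalIntegrable (fun t => (-log t) ^ n / (1 - t)) volume 0 1 := by
  have hbound := (intervalIntegrable_rpow_mul_neg_log_pow_zero_one (b := 1 / 2) (by norm_num)
    (n - 1)).const_mul 2
  rw [intervalIntegrable_iff_integrableOn_Ioo_of_le zero_le_one] at hbound ⊢
  refine hbound.mono' (by fun_prop : Measurable _).aestronglyMeasurable ?_
  filter_upwards [ae_restrict_mem measurableSet_Ioo] with t ⟨ht0, ht1⟩
  have hlog : 0 ≤ -log t := neg_nonneg.2 (log_nonpos ht0.le ht1.le)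
  have h1t : 0 < 1 - t := sub_pos.2 ht1
  calc ‖(-log t) ^ n / (1 - t)‖ = (-log t) ^ (n - 1) * (-log t) / (1 - t) := by
        rw [norm_of_nonneg (by positivity), ← pow_succ, Nat.sub_add_cancel hn]
    _ ≤ (-log t) ^ (n - 1) * (2 * (1 - t) / √t) / (1 - t) := by
        gcongr; exact neg_log_le_two_mul_one_sub_div_sqrt ht0 ht1.le
    _ = 2 * (t ^ (1 / 2 - 1 : ℝ) * (-log t) ^ (n - 1)) := by
        rw [show (1 / 2 - 1 : ℝ) = -(1 / 2) by norm_num, rpow_neg ht0.le, ← sqrt_eq_rpow]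
        field_simp

theorem integral_neg_log_pow_div_one_sub {n : ℕ} (hn : 1 ≤ n) :
    ∫ t in (0 : ℝ)..1, (-log t) ^ n / (1 - t) = n ! * ∑' k : ℕ, 1 / ((k : ℝ) + 1) ^ (n + 1) := by
  have hIoo (f : ℝ → ℝ) : ∫ t in (0 : ℝ)..1, f t = ∫ t in Ioo 0 1, f t := by
    rw [intervalIntegral.integral_of_le zero_le_one, integral_Ioc_eq_integral_Ioo]
  set F : ℕ → ℝ → ℝ := fun k t => t ^ k * (-log t) ^ n
  have hF_rpow (k : ℕ) : F k = fun t => t ^ ((k + 1 : ℝ) - 1) * (-log t) ^ n := by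
    simp [F, rpow_natCast]
  have hF_int (k : ℕ) : IntegrableOn (F k) (Ioo 0 1) := by
    rw [hF_rpow, ← intervalIntegrable_iff_integrableOn_Ioo_of_le zero_le_one]
    exact intervalIntegrable_rpow_mul_neg_log_pow_zero_one (by positivity) n
  have hF_integral (k : ℕ) : ∫ t in Ioo 0 1, F k t = n ! / ((k : ℝ) + 1) ^ (n + 1) := by
    rw [← hIoo, hF_rpow]
    exact integral_rpow_mul_neg_log_pow_zero_one (by positivity) n
  have hF_norm (k : ℕ) : ∫ t in Ioo 0 1, ‖F k t‖ = n ! / ((k : ℝ) + 1) ^ (n + 1) := by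
    rw [← hF_integral]
    refine setIntegral_congr_fun measurableSet_Ioo fun t ⟨ht0, ht1⟩ => norm_of_nonneg ?_
    have := neg_nonneg.2 (log_nonpos ht0.le ht1.le)
    positivity
  have hsummable : Summable fun k : ℕ => 1 / ((k : ℝ) + 1) ^ (n + 1) := by
    simpa using (summable_nat_add_iff 1).2 (summable_one_div_nat_pow.2 (by omega : 1 < n + 1))
  rw [hIoo, ← tsum_mul_left]
  calc ∫ t in Ioo 0 1, (-log t) ^ n / (1 - t) = ∫ t in Ioo 0 1, ∑' k, F k t :=
        setIntegral_congr_fun measurableSet_Ioo fun t ⟨ht0, ht1⟩ => by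
          rw [tsum_mul_right, tsum_geometric_of_lt_one ht0.le ht1, div_eq_inv_mul]
    _ = ∑' k, ∫ t in Ioo 0 1, F k t := (integral_tsum_of_summable_integral_norm hF_int
        (by simpa only [hF_norm, mul_one_div] using hsummable.mul_left (n ! : ℝ))).symm
    _ = _ := tsum_congr fun k => by rw [hF_integral, mul_one_div]

theorem rpow_neg_sub_one_div_one_sub (m : ℕ) {t : ℝ} (ht0 : 0 < t) (ht1 : t ≠ 1) :
    t ^ (-(m : ℝ) - 1) / (1 - t) =
      ∑ i ∈ Finset.range (m + 1), t ^ (-(i : ℝ) - 1) + 1 / (1 - t) := by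
  have h1t : 1 - t ≠ 0 := sub_ne_zero.2 ht1.symm
  induction m with
  | zero =>
    simp only [CharP.cast_eq_zero, neg_zero, zero_sub, rpow_neg_one, zero_add,
      Finset.sum_range_one]
    field_simp
    ring
  | succ m ih =>
    have hstep : t ^ (-((m + 1 : ℕ) : ℝ) - 1) = t ^ (-(m : ℝ) - 1) * t⁻¹ := by
      rw [← rpow_neg_one, ← rpow_add ht0]
      push_cast
      ring_nf
    rw [Finset.sum_range_succ, hstep]
    field_simp at ih ⊢
    linear_combination t * ih

theorem neg_one_pow_mul_rpowLogPrimitive_neg_apply_one (n : ℕ) {i : ℝ} (hi : i ≠ 0) :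
    (-1) ^ (n + 1) * rpowLogPrimitive (-i) n 1 = n ! / i ^ (n + 1) := by
  rw [rpowLogPrimitive_one (neg_ne_zero.2 hi), neg_pow i, mul_div_assoc', mul_div_mul_left]
  exact pow_ne_zero _ (by norm_num)

theorem integral_rpow_neg_mul_neg_log_pow_div_one_sub (m : ℕ) {n : ℕ} (hn : 1 ≤ n) {ε : ℝ}
    (hε0 : 0 < ε) (hε1 : ε ≤ 1) :
    ∫ t in Ioo ε 1, t ^ (-(m : ℝ) - 1) * (-log t) ^ n / (1 - t) =
      ∑ i ∈ Finset.range (m + 1), (∫ t in ε..1, t ^ (-(i : ℝ) - 1) * (-log t) ^ n)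
        + ∫ t in ε..1, (-log t) ^ n / (1 - t) := by
  have hpow (i : ℕ) (_ : i ∈ Finset.range (m + 1)) :=
    intervalIntegrable_rpow_mul_neg_log_pow (-(i : ℝ) - 1) n hε0 one_pos
  have hg : IntervalIntegrable (fun t => (-log t) ^ n / (1 - t)) volume ε 1 :=
    (intervalIntegrable_neg_log_pow_div_one_sub hn).mono_set (by
      rw [uIcc_of_le hε1, uIcc_of_le zero_le_one]
      exact Icc_subset_Icc_left hε0.le)
  have hsum := IntervalIntegrable.sum _ hpow
  rw [Finset.sum_fn] at hsum
  rw [← intervalIntegral.integral_finsetSum hpow, ← intervalIntegral.integral_add hsum hg,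
    intervalIntegral.integral_of_le hε1, integral_Ioc_eq_integral_Ioo]
  refine setIntegral_congr_fun measurableSet_Ioo fun t ⟨ht0, ht1⟩ => ?_
  rw [mul_div_right_comm, rpow_neg_sub_one_div_one_sub m (hε0.trans ht0) ht1.ne, add_mul,
    Finset.sum_mul]
  ring

namespace Negligible

theorem zero : Negligible fun _ => 0 :=
  ⟨∅, 0, ∅, 0, by simp, by simp, by simp⟩

theorem add {A B : ℝ → ℝ} (hA : Negligible A) (hB : Negligible B) :
    Negligible fun ε => A ε + B ε := by
  classical
  obtain ⟨s₁, c₁, T₁, d₁, hs₁, hT₁, hA⟩ := hA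
  obtain ⟨s₂, c₂, T₂, d₂, hs₂, hT₂, hB⟩ := hB
  refine ⟨s₁ ∪ s₂, fun q => (if q ∈ s₁ then c₁ q else 0) + (if q ∈ s₂ then c₂ q else 0),
    T₁ ∪ T₂, fun k => (if k ∈ T₁ then d₁ k else 0) + (if k ∈ T₂ then d₂ k else 0),
    fun q hq => (Finset.mem_union.1 hq).elim (hs₁ q) (hs₂ q),
    fun k hk => (Finset.mem_union.1 hk).elim (hT₁ k) (hT₂ k), fun ε => ?_⟩
  simp only [hA, hB, add_mul, Finset.sum_add_distrib, ite_mul, zero_mul, Finset.sum_ite_mem,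
    Finset.union_inter_cancel_left, Finset.union_inter_cancel_right]
  ring

theorem const_mul (a : ℝ) {A : ℝ → ℝ} (hA : Negligible A) : Negligible fun ε => a * A ε := by
  obtain ⟨s, c, T, d, hs, hT, hA⟩ := hA
  refine ⟨s, fun q => a * c q, T, fun k => a * d k, hs, hT, fun ε => ?_⟩
  simp only [hA, mul_add, Finset.mul_sum, mul_assoc]

theorem sub {A B : ℝ → ℝ} (hA : Negligible A) (hB : Negligible B) :
    Negligible fun ε => A ε - B ε := by
  simpa [sub_eq_add_neg] using hA.add (hB.const_mul (-1))

theorem finset_sum {ι : Type*} (s : Finset ι) {A : ι → ℝ → ℝ} (hA : ∀ i ∈ s, Negligible (A i)) :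
    Negligible fun ε => ∑ i ∈ s, A i ε := by
  classical
  induction s using Finset.induction_on with
  | empty => simpa using zero
  | insert i s hi ih =>
    simp only [Finset.sum_insert hi]
    exact (hA i (Finset.mem_insert_self i s)).add
      (ih fun j hj => hA j (Finset.mem_insert_of_mem hj))

end Negligible

theorem negligible_rpow_mul_log_pow {l : ℝ} (hl : l < 0) (k : ℕ) :
    Negligible fun ε => ε ^ l * log ε ^ k :=
  ⟨{(l, k)}, fun _ => 1, ∅, 0, by simpa using hl, by simp, fun ε => by
    simp only [Finset.sum_singleton, Finset.sum_empty, one_mul, add_zero]⟩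

theorem negligible_log_pow {k : ℕ} (hk : 1 ≤ k) : Negligible fun ε => log ε ^ k :=
  ⟨∅, 0, {k}, fun _ => 1, by simp, by simpa using hk, fun ε => by
    simp only [Finset.sum_singleton, Finset.sum_empty, one_mul, zero_add]⟩

theorem negligible_rpow_mul_neg_log_pow {l : ℝ} (hl : l < 0) (k : ℕ) :
    Negligible fun ε => ε ^ l * (-log ε) ^ k := by
  convert (negligible_rpow_mul_log_pow hl k).const_mul ((-1) ^ k) using 2 with ε
  rw [neg_pow (log ε)]
  ring

theorem negligible_neg_log_pow {k : ℕ} (hk : 1 ≤ k) : Negligible fun ε => (-log ε) ^ k := by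
  convert (negligible_log_pow hk).const_mul ((-1) ^ k) using 2 with ε
  rw [neg_pow (log ε)]

theorem negligible_rpowLogPrimitive {b : ℝ} (hb : b < 0) (p : ℕ) :
    Negligible (rpowLogPrimitive b p) := by
  induction p with
  | zero => simpa [rpowLogPrimitive, div_eq_inv_mul] using
      (negligible_rpow_mul_neg_log_pow hb 0).const_mul b⁻¹
  | succ p ih =>
    simpa [rpowLogPrimitive, div_eq_inv_mul] using
      ((negligible_rpow_mul_neg_log_pow hb (p + 1)).const_mul b⁻¹).add
        (ih.const_mul ((p + 1) / b))

theorem sum_integral_rpow_neg_mul_neg_log_pow (m n : ℕ) {ε : ℝ} (hε0 : 0 < ε) :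
    ∑ i ∈ Finset.range (m + 1), (∫ t in ε..1, t ^ (-(i : ℝ) - 1) * (-log t) ^ n) =
      (-log ε) ^ (n + 1) / (n + 1) +
        ∑ i ∈ Finset.Icc 1 m, (rpowLogPrimitive (-i) n 1 - rpowLogPrimitive (-i) n ε) := by
  rw [Finset.sum_range_eq_add_Ico _ (by omega : 0 < m + 1), Finset.Ico_add_one_right_eq_Icc]
  congr 1
  · simpa [rpow_neg_one] using integral_inv_mul_neg_log_pow n hε0 one_pos
  · refine Finset.sum_congr rfl fun i hi => integral_rpow_mul_neg_log_pow ?_ n hε0 one_pos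
    exact neg_ne_zero.2 (Nat.cast_pos.2 (Finset.mem_Icc.1 hi).1).ne'

theorem tendsto_integral_neg_log_pow_div_one_sub {n : ℕ} (hn : 1 ≤ n) :
    Tendsto (fun ε => ∫ t in ε..1, (-log t) ^ n / (1 - t)) (𝓝[>] 0)
      (𝓝 (n ! * ∑' k : ℕ, 1 / ((k : ℝ) + 1) ^ (n + 1))) := by
  rw [← integral_neg_log_pow_div_one_sub hn]
  have hcont := intervalIntegral.continuousOn_primitive_interval_left
    ((intervalIntegrable_iff' (by simp)).1 (intervalIntegrable_neg_log_pow_div_one_sub hn))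
  refine (hcont 0 left_mem_uIcc).mono_of_mem_nhdsWithin ?_
  rw [uIcc_of_le zero_le_one]
  exact Icc_mem_nhdsGT one_pos

theorem stmt14 (n m : ℕ) (hn : 1 ≤ n) :
    NeutrixLim (fun ε => -∫ t in Set.Ioo ε 1, t ^ (-(m : ℝ) - 1) * Real.log t ^ n / (1 - t))
      ((∑ i ∈ Finset.Icc 1 m, (n.factorial : ℝ) / (i : ℝ) ^ (n + 1)) +
        (-1) ^ (n + 1) * (n.factorial : ℝ) * ∑' k : ℕ, 1 / ((k : ℝ) + 1) ^ (n + 1)) := by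
  refine ⟨fun ε => (-1) ^ (n + 1) * ((n + 1 : ℝ)⁻¹ * (-log ε) ^ (n + 1)
      - ∑ i ∈ Finset.Icc 1 m, rpowLogPrimitive (-i) n ε), ?_, ?_⟩
  · refine (((negligible_neg_log_pow (by omega)).const_mul _).sub
      (Negligible.finset_sum _ fun i hi => negligible_rpowLogPrimitive ?_ n)).const_mul _
    exact neg_lt_zero.2 (Nat.cast_pos.2 (Finset.mem_Icc.1 hi).1)
  have hconst : ∑ i ∈ Finset.Icc 1 m, (n ! : ℝ) / (i : ℝ) ^ (n + 1) =
      (-1) ^ (n + 1) * ∑ i ∈ Finset.Icc 1 m, rpowLogPrimitive (-i) n 1 := by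
    rw [Finset.mul_sum]
    exact Finset.sum_congr rfl fun i hi => (neg_one_pow_mul_rpowLogPrimitive_neg_apply_one n
      (Nat.cast_pos.2 (Finset.mem_Icc.1 hi).1).ne').symm
  rw [hconst, mul_assoc, ← mul_add]
  refine (((tendsto_integral_neg_log_pow_div_one_sub hn).const_add _).const_mul _).congr' ?_
  filter_upwards [Ioo_mem_nhdsGT one_pos] with ε ⟨hε0, hε1⟩
  have hlog (t : ℝ) : t ^ (-(m : ℝ) - 1) * log t ^ n / (1 - t) =
      (-1) ^ n * (t ^ (-(m : ℝ) - 1) * (-log t) ^ n / (1 - t)) := by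
    rw [show log t ^ n = (-1) ^ n * (-log t) ^ n by rw [← mul_pow]; simp]
    ring
  simp only [hlog]
  rw [integral_const_mul, integral_rpow_neg_mul_neg_log_pow_div_one_sub m hn hε0 hε1.le,
    sum_integral_rpow_neg_mul_neg_log_pow m n hε0, Finset.sum_sub_distrib]
  ring
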